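/- (Sznitman–Tanaka) Let S be a separable metric space, ρ_n symmetric laws on S^n, ρ ∈ P(S). Then {ρ_n} is ρ-chaotic if and only if ρ_n ∘ ε_n^{-1} → δ_ρ weakly in P(P(S)). -/

import Mathlib

open MeasureTheory Filter Topology BoundedContinuousFunction
open scoped ENNReal NNReal

noncomputable def avgDirac {α β : Type*} [Fintype α] [MeasurableSpace β] (g : α → β) :
    Measure β :=
  ((Fintype.card α : ℝ≥0∞))⁻¹ • ∑ a : α, Measure.dirac (g a)

instance {α β : Type*} [Fintype α] [Nonempty α] [MeasurableSpace β] (g : α → β) :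
    IsProbabilityMeasure (avgDirac g) := by
  constructor
  simp [avgDirac, Measure.finset_sum_apply, ENNReal.inv_mul_cancel,
    Fintype.card_ne_zero]

noncomputable def empiricalMeasure {S : Type*} [MeasurableSpace S] {n : ℕ} (s : Fin n → S) :
    Measure S :=
  avgDirac s

instance {S : Type*} [MeasurableSpace S] {n : ℕ} [NeZero n] (s : Fin n → S) :
    IsProbabilityMeasure (empiricalMeasure s) := by
  have : Nonempty (Fin n) := Fin.pos_iff_nonempty.mp (Nat.pos_of_ne_zero (NeZero.ne n))
  unfold empiricalMeasure
  infer_instance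

noncomputable def empiricalPM {S : Type*} [MeasurableSpace S] (n : ℕ) [NeZero n]
    (s : Fin n → S) : ProbabilityMeasure S :=
  ⟨empiricalMeasure s, inferInstance⟩

def IsSymmetricLaw {S : Type*} [MeasurableSpace S] {n : ℕ} (μ : Measure (Fin n → S)) : Prop :=
  ∀ π : Equiv.Perm (Fin n), Measure.map (fun s => s ∘ π) μ = μ

/-- Kac's condition: `ρ` is `p`-chaotic. -/
def IsChaotic {S : Type*} [MeasurableSpace S] [TopologicalSpace S]
    (ρ : ∀ n, Measure (Fin n → S)) (p : Measure S) : Prop :=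
  ∀ (k : ℕ) (φ : Fin k → (S →ᵇ ℝ)),
    Tendsto
      (fun n => ∫ s, ∏ i : Fin k, φ i (s (Fin.castLE (by omega) i)) ∂ (ρ (k + n + 1)))
      atTop (𝓝 (∏ i : Fin k, ∫ x, φ i x ∂ p))

/-- The laws of the empirical measures converge to the point mass at `p` in `P(P(S))`. -/
def EmpLawTendsto {S : Type*} [MeasurableSpace S] [TopologicalSpace S] [OpensMeasurableSpace S]
    (ρ : ∀ n, Measure (Fin n → S)) (p : ProbabilityMeasure S) : Prop :=
  ∀ Φ : ProbabilityMeasure S →ᵇ ℝ,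
    Tendsto (fun n => ∫ s, Φ (empiricalPM (n + 1) s) ∂ (ρ (n + 1))) atTop (𝓝 (Φ p))


open Function

set_option linter.unusedSectionVars false

section Aux


-- integral against avgDirac
lemma integral_avgDirac {α β : Type*} [Fintype α] [MeasurableSpace β] [TopologicalSpace β]
    [OpensMeasurableSpace β] (g : α → β) (f : β →ᵇ ℝ) :
    ∫ x, f x ∂(avgDirac g) = (Fintype.card α : ℝ)⁻¹ * ∑ a : α, f (g a) := by
  rw [avgDirac, integral_smul_measure, integral_finset_sum_measure
    (fun a _ => f.integrable _)]
  simp [integral_dirac' _ _ f.continuous.stronglyMeasurable, ENNReal.toReal_inv]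

lemma integral_empiricalMeasure {S : Type*} [MeasurableSpace S] [TopologicalSpace S]
    [OpensMeasurableSpace S] {n : ℕ} (s : Fin n → S) (f : S →ᵇ ℝ) :
    ∫ x, f x ∂(empiricalMeasure s) = (n : ℝ)⁻¹ * ∑ i, f (s i) := by
  rw [empiricalMeasure, integral_avgDirac]; simp

lemma exists_perm_comp_eq {α β : Type*} [Fintype β] [DecidableEq β] {f g : α → β}
    (hf : Injective f) (hg : Injective g) :
    ∃ π : Equiv.Perm β, ∀ a, π (f a) = g a := by
  classical
  let e₀ : (Set.range f : Set β) ≃ (Set.range g : Set β) :=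
    (Equiv.ofInjective f hf).symm.trans (Equiv.ofInjective g hg)
  have hcard : Fintype.card ((Set.range f)ᶜ : Set β) = Fintype.card ((Set.range g)ᶜ : Set β) := by
    rw [Fintype.card_compl_set, Fintype.card_compl_set, Fintype.card_congr e₀]
  obtain ⟨e, he⟩ := ((Equiv.Set.compl e₀).symm (Fintype.equivOfCardEq hcard) : _)
  refine ⟨e, fun a => ?_⟩
  have := he ⟨f a, Set.mem_range_self a⟩
  simpa [e₀, Equiv.ofInjective_symm_apply] using this



variable {S : Type*} [MetricSpace S] [TopologicalSpace.SeparableSpace S]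
    [MeasurableSpace S] [BorelSpace S]

instance : SecondCountableTopology S := UniformSpace.secondCountable_of_separable S

lemma measurable_comp_perm {n : ℕ} (π : Equiv.Perm (Fin n)) :
    Measurable (fun s : Fin n → S => s ∘ π) :=
  measurable_pi_lambda _ fun i => measurable_pi_apply (π i)

lemma integral_comp_perm {n : ℕ} {ρ : Measure (Fin n → S)} (hsym : IsSymmetricLaw ρ)
    (π : Equiv.Perm (Fin n)) {F : (Fin n → S) → ℝ} (hF : AEStronglyMeasurable F ρ) :
    ∫ s, F (s ∘ π) ∂ρ = ∫ s, F s ∂ρ := by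
  conv_rhs => rw [← hsym π]
  rw [integral_map (measurable_comp_perm π).aemeasurable]
  rwa [hsym π]

lemma continuous_prod_eval {n k : ℕ} (φ : Fin k → (S →ᵇ ℝ)) (g : Fin k → Fin n) :
    Continuous (fun s : Fin n → S => ∏ i, φ i (s (g i))) :=
  continuous_finset_prod _ fun i _ => (φ i).continuous.comp (continuous_apply (g i))

lemma integrable_prod_eval {n k : ℕ} (φ : Fin k → (S →ᵇ ℝ)) (g : Fin k → Fin n)
    (ρ : Measure (Fin n → S)) [IsProbabilityMeasure ρ] :
    Integrable (fun s : Fin n → S => ∏ i, φ i (s (g i))) ρ := by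
  refine (integrable_const (∏ i, ‖φ i‖)).mono'
    (continuous_prod_eval φ g).aestronglyMeasurable ?_
  filter_upwards with s
  calc ‖∏ i, φ i (s (g i))‖ = ∏ i, ‖φ i (s (g i))‖ := by
        simp [Real.norm_eq_abs, Finset.abs_prod]
  _ ≤ ∏ i, ‖φ i‖ := Finset.prod_le_prod (fun _ _ => norm_nonneg _)
      (fun i _ => (φ i).norm_coe_le_norm _)

-- A4
lemma integral_prod_eval_of_injective {n k : ℕ} {ρ : Measure (Fin n → S)}
    (hsym : IsSymmetricLaw ρ) (φ : Fin k → (S →ᵇ ℝ)) {j g : Fin k → Fin n}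
    (hj : Injective j) (hg : Injective g) :
    ∫ s, ∏ i, φ i (s (j i)) ∂ρ = ∫ s, ∏ i, φ i (s (g i)) ∂ρ := by
  obtain ⟨π, hπ⟩ := exists_perm_comp_eq hg hj
  have : ∀ s : Fin n → S, (∏ i, φ i (s (j i))) = ∏ i, φ i ((s ∘ π) (g i)) := by
    intro s; simp [comp_apply, hπ]
  simp_rw [this]
  exact integral_comp_perm hsym π (continuous_prod_eval φ g).aestronglyMeasurable

lemma probabilityMeasure_nhds_subbasis {Ω : Type*} [MeasurableSpace Ω] [TopologicalSpace Ω]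
    [OpensMeasurableSpace Ω] {p : ProbabilityMeasure Ω} {U : Set (ProbabilityMeasure Ω)}
    (hU : U ∈ 𝓝 p) :
    ∃ (T : Finset (Ω →ᵇ ℝ≥0)) (ε : ℝ), 0 < ε ∧
      ∀ μ : ProbabilityMeasure Ω,
        (∀ f ∈ T, |∫ x, (f x : ℝ) ∂(μ : Measure Ω) - ∫ x, (f x : ℝ) ∂(p : Measure Ω)| < ε) →
        μ ∈ U := by
  classical
  have i1 : IsInducing (ProbabilityMeasure.toFiniteMeasure (Ω := Ω)) :=
    ⟨rfl⟩
  have i2 : IsInducing (FiniteMeasure.toWeakDualBCNN (Ω := Ω)) :=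
    ⟨rfl⟩
  have i3 : IsInducing (fun (φ : WeakDual ℝ≥0 (Ω →ᵇ ℝ≥0)) (f : Ω →ᵇ ℝ≥0) => φ f) := ⟨rfl⟩
  have ig : IsInducing (fun (μ : ProbabilityMeasure Ω) (f : Ω →ᵇ ℝ≥0) =>
      (μ.toFiniteMeasure.toWeakDualBCNN f)) := (i3.comp i2).comp i1
  set g : ProbabilityMeasure Ω → (Ω →ᵇ ℝ≥0) → ℝ≥0 :=
    fun μ f => μ.toFiniteMeasure.toWeakDualBCNN f with hg
  have hnhds : 𝓝 p = Filter.comap g (𝓝 (g p)) := ig.nhds_eq_comap p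
  rw [hnhds, Filter.mem_comap] at hU
  obtain ⟨V, hV, hVU⟩ := hU
  rw [nhds_pi] at hV
  obtain ⟨I, V', hV'mem, hIV⟩ := Filter.mem_pi'.mp hV
  -- key conversion : (g μ f : ℝ) = ∫ x, f x ∂μ
  have key : ∀ (μ : ProbabilityMeasure Ω) (f : Ω →ᵇ ℝ≥0),
      (g μ f : ℝ) = ∫ x, (f x : ℝ) ∂(μ : Measure Ω) := by
    intro μ f
    have : (g μ f : ℝ) = (∫⁻ x, f x ∂(μ : Measure Ω)).toReal := rfl
    rw [this, BoundedContinuousFunction.toReal_lintegral_coe_eq_integral]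
  choose ε' hε'pos hball using fun f => Metric.mem_nhds_iff.mp (hV'mem f)
  rcases I.eq_empty_or_nonempty with hI | hI
  · exact ⟨∅, 1, one_pos, fun μ _ => hVU (hIV (by simp [hI]))⟩
  · refine ⟨I, I.inf' hI ε', ?_, ?_⟩
    · exact (Finset.lt_inf'_iff hI).mpr fun f _ => hε'pos f
    · intro μ hμ
      apply hVU
      apply hIV
      intro f hf
      apply hball f
      have hdist : dist (g μ f) (g p f) < ε' f := by
        rw [NNReal.dist_eq, key, key]
        exact lt_of_lt_of_le (hμ f hf) (Finset.inf'_le _ hf)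
      exact hdist

-- count of injective functions
lemma card_injective_eq {k m : ℕ} :
    (Finset.univ.filter (fun g : Fin k → Fin m => Injective g)).card = m.descFactorial k := by
  classical
  rw [← Fintype.card_subtype]
  rw [Fintype.card_congr (Equiv.subtypeInjectiveEquivEmbedding (Fin k) (Fin m))]
  rw [Fintype.card_embedding_eq, Fintype.card_fin, Fintype.card_fin]

lemma tendsto_descFactorial_ratio (k : ℕ) :
    Tendsto (fun m : ℕ => (m.descFactorial k : ℝ) * ((m : ℝ)⁻¹) ^ k) atTop (𝓝 1) := by
  have hfac : ∀ i : ℕ, Tendsto (fun m : ℕ => ((m : ℝ) - i) * (m : ℝ)⁻¹) atTop (𝓝 1) := by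
    intro i
    have h1 : Tendsto (fun m : ℕ => 1 - (i : ℝ) * (m : ℝ)⁻¹) atTop (𝓝 (1 - (i:ℝ) * 0)) :=
      tendsto_const_nhds.sub (tendsto_const_nhds.mul tendsto_inv_atTop_nhds_zero_nat)
    rw [mul_zero, sub_zero] at h1
    apply h1.congr'
    filter_upwards [eventually_ge_atTop 1] with m hm
    have hm0 : (m : ℝ) ≠ 0 := by positivity
    field_simp
  have hprod : Tendsto (fun m : ℕ => ∏ i ∈ Finset.range k, (((m : ℝ) - i) * (m : ℝ)⁻¹)) atTop
      (𝓝 (∏ _i ∈ Finset.range k, (1 : ℝ))) := tendsto_finset_prod _ (fun i _ => hfac i)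
  rw [Finset.prod_const_one] at hprod
  apply hprod.congr'
  filter_upwards [eventually_ge_atTop k] with m hm
  rw [Nat.descFactorial_eq_prod_range]
  push_cast [Finset.prod_mul_distrib]
  rw [Finset.prod_const, Finset.card_range]
  congr 1
  refine Finset.prod_congr rfl fun i hi => ?_
  rw [Nat.cast_sub (le_trans (Finset.mem_range.mp hi).le hm)]

end Aux

section DirB
variable {S : Type*} [MetricSpace S] [TopologicalSpace.SeparableSpace S]
    [MeasurableSpace S] [BorelSpace S]

lemma continuous_empiricalPM {m : ℕ} [NeZero m] :
    Continuous (fun s : Fin m → S => empiricalPM m s) := by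
  rw [continuous_iff_continuousAt]
  intro s0
  apply ProbabilityMeasure.tendsto_iff_forall_integral_tendsto.mpr
  intro f
  have hc : ∀ s : Fin m → S, ∫ x, f x ∂((empiricalPM m s : Measure S))
      = (m : ℝ)⁻¹ * ∑ i, f (s i) := fun s => integral_empiricalMeasure s f
  simp_rw [hc]
  exact ((continuous_const.mul (continuous_finset_sum _ fun i _ =>
    f.continuous.comp (continuous_apply i))).tendsto s0)

lemma phi_bound (k : ℕ) (φ : Fin k → (S →ᵇ ℝ)) (μ : ProbabilityMeasure S) :
    ‖∏ i, ∫ x, φ i x ∂(μ : Measure S)‖ ≤ ∏ i, ‖φ i‖ := by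
  rw [Real.norm_eq_abs, Finset.abs_prod]
  refine Finset.prod_le_prod (fun _ _ => abs_nonneg _) (fun i _ => ?_)
  rw [← Real.norm_eq_abs]
  calc ‖∫ x, φ i x ∂(μ : Measure S)‖ ≤ ‖φ i‖ * ((μ : Measure S) Set.univ).toReal :=
        norm_integral_le_of_norm_le_const
          (Filter.Eventually.of_forall fun x => (φ i).norm_coe_le_norm x)
  _ = ‖φ i‖ := by simp

/-- The test function `μ ↦ ∏ i, ∫ φ i dμ` as a bounded continuous function. -/
noncomputable def prodTest (k : ℕ) (φ : Fin k → (S →ᵇ ℝ)) : ProbabilityMeasure S →ᵇ ℝ :=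
  BoundedContinuousFunction.ofNormedAddCommGroup
    (fun μ => ∏ i, ∫ x, φ i x ∂(μ : Measure S))
    (continuous_finset_prod _ fun i _ =>
      ProbabilityMeasure.continuous_integral_boundedContinuousFunction (φ i))
    (∏ i, ‖φ i‖) (phi_bound k φ)

lemma prodTest_apply (k : ℕ) (φ : Fin k → (S →ᵇ ℝ)) (μ : ProbabilityMeasure S) :
    prodTest k φ μ = ∏ i, ∫ x, φ i x ∂(μ : Measure S) := rfl

lemma abs_integral_prod_le {n k : ℕ} (φ : Fin k → (S →ᵇ ℝ)) (g : Fin k → Fin n)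
    (ρ : Measure (Fin n → S)) [IsProbabilityMeasure ρ] :
    |∫ s, ∏ i, φ i (s (g i)) ∂ρ| ≤ ∏ i, ‖φ i‖ := by
  rw [← Real.norm_eq_abs]
  calc ‖∫ s, ∏ i, φ i (s (g i)) ∂ρ‖ ≤ (∏ i, ‖φ i‖) * (ρ Set.univ).toReal := by
        apply norm_integral_le_of_norm_le_const
        filter_upwards with s
        calc ‖∏ i, φ i (s (g i))‖ = ∏ i, ‖φ i (s (g i))‖ := by
              simp [Real.norm_eq_abs, Finset.abs_prod]
        _ ≤ ∏ i, ‖φ i‖ := Finset.prod_le_prod (fun _ _ => norm_nonneg _)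
              (fun i _ => (φ i).norm_coe_le_norm _)
  _ = ∏ i, ‖φ i‖ := by simp

lemma key_estimate {k m : ℕ} (hk : k ≤ m) [NeZero m] (φ : Fin k → (S →ᵇ ℝ))
    {ρm : Measure (Fin m → S)} [IsProbabilityMeasure ρm] (hsym : IsSymmetricLaw ρm) :
    |(∫ s, (prodTest k φ) (empiricalPM m s) ∂ρm) - ∫ s, ∏ i, φ i (s (Fin.castLE hk i)) ∂ρm|
      ≤ 2 * (1 - (m.descFactorial k : ℝ) * ((m : ℝ)⁻¹) ^ k) * ∏ i, ‖φ i‖ := by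
  classical
  set M : ℝ := ∏ i, ‖φ i‖ with hM
  have hM0 : 0 ≤ M := Finset.prod_nonneg fun _ _ => norm_nonneg _
  set r : ℝ := ((m : ℝ)⁻¹) ^ k with hr
  have hr0 : 0 ≤ r := by positivity
  set E : ℝ := ∫ s, ∏ i, φ i (s (Fin.castLE hk i)) ∂ρm with hE
  -- step 1 : pointwise identity
  have step1 : ∀ s : Fin m → S, (prodTest k φ) (empiricalPM m s)
      = r * ∑ g : Fin k → Fin m, ∏ i, φ i (s (g i)) := by
    intro s
    rw [prodTest_apply]
    have : ∀ i : Fin k, ∫ x, φ i x ∂((empiricalPM m s : Measure S))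
        = (m : ℝ)⁻¹ * ∑ j, φ i (s j) := fun i => integral_empiricalMeasure s (φ i)
    simp_rw [this, Finset.prod_mul_distrib, Finset.prod_const, Finset.card_univ,
      Fintype.card_fin]
    congr 1
    rw [Finset.prod_univ_sum]
    rw [← Fintype.piFinset_univ]
  simp_rw [step1]
  -- step 2 : integrate
  rw [integral_const_mul, integral_finset_sum _ (fun g _ => integrable_prod_eval φ g ρm)]
  -- step 3 : split the sum
  rw [← Finset.sum_filter_add_sum_filter_not Finset.univ (fun g : Fin k → Fin m => Injective g)]
  have hinj : ∀ g ∈ Finset.univ.filter (fun g : Fin k → Fin m => Injective g),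
      ∫ s, ∏ i, φ i (s (g i)) ∂ρm = E := by
    intro g hg
    exact (integral_prod_eval_of_injective hsym φ (Fin.castLE_injective hk)
      (Finset.mem_filter.mp hg).2).symm
  rw [Finset.sum_congr rfl hinj, Finset.sum_const, card_injective_eq, nsmul_eq_mul]
  set N : ℕ := m.descFactorial k with hN
  set R : ℝ := ∑ g ∈ Finset.univ.filter (fun g : Fin k → Fin m => ¬ Injective g),
    ∫ s, ∏ i, φ i (s (g i)) ∂ρm with hRdef
  -- bounds
  have hEb : |E| ≤ M := abs_integral_prod_le φ _ ρm
  have hNle : (N : ℝ) ≤ (m : ℝ) ^ k := by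
    have := Nat.descFactorial_le_pow m k
    exact_mod_cast this
  have hrm : r * (m : ℝ) ^ k = 1 := by
    rw [hr, inv_pow, inv_mul_cancel₀]
    have : (m : ℝ) ≠ 0 := Nat.cast_ne_zero.mpr (NeZero.ne m)
    positivity
  have hcardnot : ((Finset.univ.filter (fun g : Fin k → Fin m => ¬ Injective g)).card : ℝ)
      = (m : ℝ) ^ k - N := by
    have h1 := Finset.card_filter_add_card_filter_not (s := Finset.univ)
      (p := fun g : Fin k → Fin m => Injective g)
    rw [card_injective_eq] at h1
    have h2 : (Finset.univ : Finset (Fin k → Fin m)).card = m ^ k := by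
      rw [Finset.card_univ, Fintype.card_fun, Fintype.card_fin, Fintype.card_fin]
    rw [h2] at h1
    have : (Finset.univ.filter (fun g : Fin k → Fin m => ¬ Injective g)).card = m ^ k - N := by
      omega
    rw [this]
    push_cast [Nat.cast_sub (by omega : N ≤ m ^ k)]
    ring
  have hRb : |R| ≤ ((m : ℝ) ^ k - N) * M := by
    rw [hRdef, ← hcardnot]
    calc |∑ g ∈ Finset.univ.filter (fun g : Fin k → Fin m => ¬ Injective g),
          ∫ s, ∏ i, φ i (s (g i)) ∂ρm|
        ≤ ∑ g ∈ Finset.univ.filter (fun g : Fin k → Fin m => ¬ Injective g),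
          |∫ s, ∏ i, φ i (s (g i)) ∂ρm| := Finset.abs_sum_le_sum_abs _ _
      _ ≤ ∑ _g ∈ Finset.univ.filter (fun g : Fin k → Fin m => ¬ Injective g), M :=
          Finset.sum_le_sum fun g _ => abs_integral_prod_le φ g ρm
      _ = _ := by rw [Finset.sum_const, nsmul_eq_mul]
  have hrN1 : r * N ≤ 1 := by
    calc r * N ≤ r * (m : ℝ) ^ k := by
          apply mul_le_mul_of_nonneg_left hNle hr0
    _ = 1 := hrm
  -- final arithmetic
  have harith : r * ((N : ℝ) * E + R) - E = (r * N - 1) * E + r * R := by ring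
  rw [harith]
  calc |(r * N - 1) * E + r * R| ≤ |(r * N - 1) * E| + |r * R| := abs_add_le _ _
    _ = (1 - r * N) * |E| + r * |R| := by
        rw [abs_mul, abs_mul, abs_of_nonneg hr0, abs_of_nonpos (by linarith), neg_sub]
    _ ≤ (1 - r * N) * M + r * (((m : ℝ) ^ k - N) * M) := by
        have t1 : (1 - r * N) * |E| ≤ (1 - r * N) * M :=
          mul_le_mul_of_nonneg_left hEb (by linarith)
        have t2 : r * |R| ≤ r * (((m : ℝ) ^ k - N) * M) :=
          mul_le_mul_of_nonneg_left hRb hr0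
        linarith
    _ = 2 * (1 - (N : ℝ) * r) * M := by
        have : r * (((m : ℝ) ^ k - N) * M) = (r * (m : ℝ) ^ k) * M - r * N * M := by ring
        rw [this, hrm]
        ring

end DirB

lemma isChaotic_of_empLawTendsto
    {S : Type*} [MetricSpace S] [TopologicalSpace.SeparableSpace S] [MeasurableSpace S]
    [BorelSpace S]
    (ρ : ∀ n, Measure (Fin n → S)) (hprob : ∀ n, IsProbabilityMeasure (ρ n))
    (hsym : ∀ n, IsSymmetricLaw (ρ n)) (p : ProbabilityMeasure S)
    (h : EmpLawTendsto ρ p) : IsChaotic ρ (p : Measure S) := by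
  intro k φ
  haveI : ∀ n, IsProbabilityMeasure (ρ n) := hprob
  set M : ℝ := ∏ i, ‖φ i‖ with hM
  set A : ℕ → ℝ := fun m => ∫ s, (prodTest k φ) (empiricalPM (m + 1) s) ∂(ρ (m + 1)) with hA
  have hΦ : Tendsto A atTop (𝓝 (∏ i, ∫ x, φ i x ∂(p : Measure S))) := h (prodTest k φ)
  have hshift : Tendsto (fun n => A (k + n)) atTop
      (𝓝 (∏ i, ∫ x, φ i x ∂(p : Measure S))) :=
    hΦ.comp (tendsto_atTop_mono (fun n => Nat.le_add_left n k) tendsto_id)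
  set D : ℕ → ℝ := fun n =>
    ∫ s, ∏ i, φ i (s (Fin.castLE (by omega : k ≤ k + n + 1) i)) ∂(ρ (k + n + 1)) with hD
  have hb : ∀ n : ℕ, ‖A (k + n) - D n‖ ≤
      2 * (1 - ((k + n + 1).descFactorial k : ℝ) * (((k + n + 1 : ℕ) : ℝ)⁻¹) ^ k) * M := by
    intro n
    rw [Real.norm_eq_abs]
    exact key_estimate (by omega) φ (hsym (k + n + 1))
  have hb0 : Tendsto (fun n => 2 * (1 - ((k + n + 1).descFactorial k : ℝ)
      * (((k + n + 1 : ℕ) : ℝ)⁻¹) ^ k) * M) atTop (𝓝 0) := by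
    have h3 := (tendsto_descFactorial_ratio k).comp
      (tendsto_atTop_mono (fun n : ℕ => (Nat.le_add_left n k).trans (Nat.le_succ _)) tendsto_id)
    have h4 : Tendsto (fun n => 2 * (1 - ((k + n + 1).descFactorial k : ℝ)
        * (((k + n + 1 : ℕ) : ℝ)⁻¹) ^ k) * M) atTop (𝓝 (2 * (1 - 1) * M)) :=
      Tendsto.mul (tendsto_const_nhds.mul (tendsto_const_nhds.sub h3)) tendsto_const_nhds
    simpa using h4
  have hdiff : Tendsto (fun n => A (k + n) - D n) atTop (𝓝 0) := squeeze_zero_norm hb hb0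
  have hfin : Tendsto (fun n => A (k + n) - (A (k + n) - D n)) atTop
      (𝓝 (∏ i, ∫ x, φ i x ∂(p : Measure S) - 0)) := hshift.sub hdiff
  rw [sub_zero] at hfin
  have hDeq : (fun n => A (k + n) - (A (k + n) - D n)) = D := by funext n; ring
  rw [hDeq] at hfin
  exact hfin

section DirF
variable {S : Type*} [MetricSpace S] [TopologicalSpace.SeparableSpace S]
    [MeasurableSpace S] [BorelSpace S]

lemma injective_pair {β : Type*} {i j : β} (hij : i ≠ j) : Function.Injective ![i, j] := by
  intro a b hab
  fin_cases a <;> fin_cases b <;> simp_all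

/-- abbreviation for the empirical integral -/
noncomputable def empInt {m : ℕ} (f : S →ᵇ ℝ) (s : Fin m → S) : ℝ :=
  ∫ x, f x ∂(empiricalMeasure s)

lemma empInt_eq {m : ℕ} (f : S →ᵇ ℝ) (s : Fin m → S) :
    empInt f s = (m : ℝ)⁻¹ * ∑ i, f (s i) := integral_empiricalMeasure s f

lemma continuous_empInt {m : ℕ} (f : S →ᵇ ℝ) : Continuous (empInt (m := m) f) := by
  have : (empInt (m := m) f) = fun s => (m : ℝ)⁻¹ * ∑ i, f (s i) := funext (empInt_eq f)
  rw [this]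
  exact continuous_const.mul (continuous_finset_sum _ fun i _ =>
    f.continuous.comp (continuous_apply i))

lemma abs_empInt_le {m : ℕ} [NeZero m] (f : S →ᵇ ℝ) (s : Fin m → S) :
    |empInt f s| ≤ ‖f‖ := by
  have hm : (0:ℝ) < m := by
    have := Nat.pos_of_ne_zero (NeZero.ne m); exact_mod_cast this
  rw [empInt_eq, abs_mul, abs_inv, Nat.abs_cast]
  calc (m:ℝ)⁻¹ * |∑ i, f (s i)| ≤ (m:ℝ)⁻¹ * ∑ i : Fin m, ‖f‖ := by
        apply mul_le_mul_of_nonneg_left _ (by positivity)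
        refine (Finset.abs_sum_le_sum_abs _ _).trans (Finset.sum_le_sum fun i _ => ?_)
        exact f.norm_coe_le_norm _
  _ = ‖f‖ := by
        rw [Finset.sum_const, Finset.card_univ, Fintype.card_fin, nsmul_eq_mul]
        field_simp
-- variance bound for a single m
lemma var_bound {m : ℕ} [NeZero m] (h2 : 2 ≤ m) (g : S →ᵇ ℝ)
    {ρm : Measure (Fin m → S)} [IsProbabilityMeasure ρm] (hsym : IsSymmetricLaw ρm) :
    ∫ s, (empInt g s) ^ 2 ∂ρm ≤ (m : ℝ)⁻¹ * (‖g‖ * ‖g‖)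
      + |∫ s, ∏ l : Fin 2, (![g,g] l) (s (Fin.castLE h2 l)) ∂ρm| := by
  classical
  have hm0 : (m : ℝ) ≠ 0 := Nat.cast_ne_zero.mpr (NeZero.ne m)
  set C : ℝ := ∫ s, ∏ l : Fin 2, (![g,g] l) (s (Fin.castLE h2 l)) ∂ρm with hC
  set T : Fin m → Fin m → ℝ := fun i j => ∫ s, ∏ l : Fin 2, (![g,g] l) (s (![i,j] l)) ∂ρm with hT
  have pair_eq : ∀ (s : Fin m → S) (i j : Fin m),
      g (s i) * g (s j) = ∏ l : Fin 2, (![g,g] l) (s (![i,j] l)) := by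
    intro s i j
    rw [Fin.prod_univ_two]
    simp
  have hexp : ∫ s, (empInt g s) ^ 2 ∂ρm
      = ((m:ℝ)⁻¹)^2 * ∑ i : Fin m, ∑ j : Fin m, T i j := by
    have h1 : ∀ s : Fin m → S, (empInt g s) ^ 2
        = ((m:ℝ)⁻¹)^2 * ∑ i : Fin m, ∑ j : Fin m, ∏ l : Fin 2, (![g,g] l) (s (![i,j] l)) := by
      intro s
      rw [empInt_eq, mul_pow, pow_two (∑ i : Fin m, g (s i)), Finset.sum_mul_sum]
      congr 1
      refine Finset.sum_congr rfl fun i _ => Finset.sum_congr rfl fun j _ => pair_eq s i j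
    simp_rw [h1]
    rw [integral_const_mul]
    congr 1
    rw [integral_finset_sum _ (fun i _ => integrable_finset_sum _
      (fun j _ => integrable_prod_eval ![g,g] ![i,j] ρm))]
    exact Finset.sum_congr rfl fun i _ =>
      integral_finset_sum _ (fun j _ => integrable_prod_eval ![g,g] ![i,j] ρm)
  have hTC : ∀ i j : Fin m, i ≠ j → T i j = C := fun i j hij =>
    integral_prod_eval_of_injective hsym ![g,g] (injective_pair hij) (Fin.castLE_injective h2)
  have hTd : ∀ i : Fin m, T i i ≤ ‖g‖ * ‖g‖ := by
    intro i
    have := abs_integral_prod_le ![g,g] ![i,i] ρm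
    have h2' : (∏ l : Fin 2, ‖![g,g] l‖) = ‖g‖ * ‖g‖ := by
      rw [Fin.prod_univ_two]; simp
    calc T i i ≤ |T i i| := le_abs_self _
    _ ≤ ∏ l : Fin 2, ‖![g,g] l‖ := this
    _ = ‖g‖ * ‖g‖ := h2'
  have hsum : ∀ i : Fin m, ∑ j : Fin m, T i j ≤ ‖g‖ * ‖g‖ + (m : ℝ) * |C| := by
    intro i
    rw [← Finset.add_sum_erase Finset.univ (T i) (Finset.mem_univ i)]
    have : ∑ j ∈ Finset.univ.erase i, T i j = ((m : ℕ) - 1 : ℕ) * C := by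
      rw [Finset.sum_congr rfl (fun j hj => hTC i j (Finset.ne_of_mem_erase hj).symm)]
      rw [Finset.sum_const, Finset.card_erase_of_mem (Finset.mem_univ i),
        Finset.card_univ, Fintype.card_fin, nsmul_eq_mul]
    rw [this]
    have hb : ((m : ℕ) - 1 : ℕ) * C ≤ (m : ℝ) * |C| := by
      calc ((m : ℕ) - 1 : ℕ) * C ≤ |((m : ℕ) - 1 : ℕ) * C| := le_abs_self _
      _ = ((m : ℕ) - 1 : ℕ) * |C| := by rw [abs_mul, Nat.abs_cast]
      _ ≤ (m : ℝ) * |C| := by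
          apply mul_le_mul_of_nonneg_right _ (abs_nonneg _)
          exact_mod_cast Nat.sub_le m 1
    linarith [hTd i]
  have hfinal : ∫ s, (empInt g s) ^ 2 ∂ρm
      ≤ ((m:ℝ)⁻¹)^2 * ((m:ℝ) * (‖g‖ * ‖g‖ + (m : ℝ) * |C|)) := by
    rw [hexp]
    apply mul_le_mul_of_nonneg_left _ (by positivity)
    calc ∑ i : Fin m, ∑ j : Fin m, T i j ≤ ∑ _i : Fin m, (‖g‖ * ‖g‖ + (m : ℝ) * |C|) :=
          Finset.sum_le_sum fun i _ => hsum i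
    _ = (m:ℝ) * (‖g‖ * ‖g‖ + (m : ℝ) * |C|) := by
        rw [Finset.sum_const, Finset.card_univ, Fintype.card_fin, nsmul_eq_mul]
  calc ∫ s, (empInt g s) ^ 2 ∂ρm
      ≤ ((m:ℝ)⁻¹)^2 * ((m:ℝ) * (‖g‖ * ‖g‖ + (m : ℝ) * |C|)) := hfinal
  _ = (m : ℝ)⁻¹ * (‖g‖ * ‖g‖) + |C| := by field_simp

end DirF

section DirF2
variable {S : Type*} [MetricSpace S] [TopologicalSpace.SeparableSpace S]
    [MeasurableSpace S] [BorelSpace S]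

lemma meas_bad_tendsto (ρ : ∀ n, Measure (Fin n → S)) (hprob : ∀ n, IsProbabilityMeasure (ρ n))
    (hsym : ∀ n, IsSymmetricLaw (ρ n)) (p : ProbabilityMeasure S)
    (hchaos : IsChaotic ρ (p : Measure S)) (f : S →ᵇ ℝ) {ε : ℝ} (hε : 0 < ε) :
    Tendsto (fun n => ((ρ (n + 1))
        {s | ε ≤ |empInt f s - ∫ x, f x ∂(p : Measure S)|}).toReal) atTop (𝓝 0) := by
  haveI : ∀ n, IsProbabilityMeasure (ρ n) := hprob
  set c : ℝ := ∫ x, f x ∂(p : Measure S) with hc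
  set g : S →ᵇ ℝ := f - BoundedContinuousFunction.const S c with hgdef
  have hgx : ∀ x, g x = f x - c := fun x => rfl
  have hgp : ∫ x, g x ∂(p : Measure S) = 0 := by
    have : ∫ x, g x ∂(p : Measure S)
        = (∫ x, f x ∂(p : Measure S)) - ∫ _x, c ∂(p : Measure S) := by
      simp_rw [hgx]
      exact integral_sub (f.integrable _) (integrable_const c)
    rw [this, integral_const]
    simp [hc]
  have hXg : ∀ (m : ℕ) (_ : NeZero m) (s : Fin m → S), empInt g s = empInt f s - c := by
    intro m hm s
    have hm0 : (m : ℝ) ≠ 0 := Nat.cast_ne_zero.mpr (NeZero.ne m)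
    rw [empInt_eq, empInt_eq]
    simp_rw [hgx]
    rw [Finset.sum_sub_distrib, Finset.sum_const, Finset.card_univ, Fintype.card_fin,
      nsmul_eq_mul, mul_sub]
    congr 1
    field_simp
  -- the variance sequence
  set V : ℕ → ℝ := fun m => ∫ s : Fin m → S, (empInt g s) ^ 2 ∂(ρ m) with hV
  -- chaos at k = 2
  have hP : Tendsto (fun n => ∫ s, ∏ i : Fin 2, (![g,g] i)
      (s (Fin.castLE (by omega : 2 ≤ 2 + n + 1) i)) ∂(ρ (2 + n + 1))) atTop (𝓝 0) := by
    have h0 : (∏ i : Fin 2, ∫ x, (![g,g] i) x ∂(p : Measure S)) = 0 := by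
      rw [Fin.prod_univ_two]
      simp [hgp]
    have := hchaos 2 ![g,g]
    rwa [h0] at this
  have hu : Tendsto (fun n => (((2 + n + 1 : ℕ) : ℝ))⁻¹ * (‖g‖ * ‖g‖)
      + |∫ s, ∏ i : Fin 2, (![g,g] i)
      (s (Fin.castLE (by omega : 2 ≤ 2 + n + 1) i)) ∂(ρ (2 + n + 1))|) atTop (𝓝 0) := by
    have h1 : Tendsto (fun n : ℕ => (((2 + n + 1 : ℕ) : ℝ))⁻¹) atTop (𝓝 0) :=
      tendsto_inv_atTop_nhds_zero_nat.comp
        (tendsto_atTop_mono (fun n => (Nat.le_add_left n 2).trans (Nat.le_succ _)) tendsto_id)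
    have h2 : Tendsto (fun n : ℕ => (((2 + n + 1 : ℕ) : ℝ))⁻¹ * (‖g‖ * ‖g‖)) atTop
        (𝓝 (0 * (‖g‖ * ‖g‖))) := h1.mul tendsto_const_nhds
    rw [zero_mul] at h2
    have h3 := h2.add hP.abs
    simpa using h3
  have hVlim : Tendsto (fun n => V (2 + n + 1)) atTop (𝓝 0) := by
    apply squeeze_zero (fun n => integral_nonneg fun s => sq_nonneg _) (fun n => ?_) hu
    exact var_bound (by omega) g (hsym (2 + n + 1))
  have hVlim1 : Tendsto (fun n => V (n + 1)) atTop (𝓝 0) := by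
    rw [← Filter.tendsto_add_atTop_iff_nat 2]
    have : (fun n => (fun k => V (k + 1)) (n + 2)) = fun n => V (2 + n + 1) :=
      funext fun n => congrArg V (by omega)
    rw [this]
    exact hVlim
  -- Chebyshev
  have cheb : ∀ n : ℕ, ((ρ (n + 1)) {s | ε ≤ |empInt f s - c|}).toReal
      ≤ (ε ^ 2)⁻¹ * V (n + 1) := by
    intro n
    set m : ℕ := n + 1
    have hset : {s : Fin m → S | ε ≤ |empInt f s - c|} = {s | ε ≤ |empInt g s|} := by
      ext s
      rw [Set.mem_setOf_eq, Set.mem_setOf_eq, hXg m ⟨Nat.succ_ne_zero n⟩ s]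
    have hint : Integrable (fun s : Fin m → S => (empInt g s) ^ 2) (ρ m) := by
      refine (integrable_const (‖g‖ * ‖g‖)).mono'
        (((continuous_empInt g).pow 2).aestronglyMeasurable) ?_
      filter_upwards with s
      have h1 : |empInt g s| ≤ ‖g‖ := abs_empInt_le g s
      calc ‖(empInt g s) ^ 2‖ = |empInt g s| ^ 2 := by
            rw [Real.norm_eq_abs, abs_pow]
      _ ≤ ‖g‖ ^ 2 := pow_le_pow_left₀ (abs_nonneg _) h1 2
      _ = ‖g‖ * ‖g‖ := sq ‖g‖
    have key := mul_meas_ge_le_integral_of_nonneg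
      (Filter.Eventually.of_forall fun s : Fin m → S => sq_nonneg (empInt g s)) hint (ε ^ 2)
    have hsub : {s : Fin m → S | ε ≤ |empInt g s|} ⊆ {s | ε ^ 2 ≤ (empInt g s) ^ 2} := by
      intro s hs
      rw [Set.mem_setOf_eq] at hs ⊢
      calc ε ^ 2 ≤ |empInt g s| ^ 2 := pow_le_pow_left₀ hε.le hs 2
      _ = (empInt g s) ^ 2 := sq_abs _
    have hmono : ((ρ m) {s | ε ≤ |empInt g s|}).toReal
        ≤ ((ρ m) {s | ε ^ 2 ≤ (empInt g s) ^ 2}).toReal :=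
      ENNReal.toReal_mono (measure_ne_top _ _) (measure_mono hsub)
    rw [hset]
    have hε2 : (0:ℝ) < ε ^ 2 := by positivity
    have h2 : ((ρ m) {s | ε ^ 2 ≤ (empInt g s) ^ 2}).toReal ≤ (ε ^ 2)⁻¹ * V m := by
      rw [← div_eq_inv_mul]
      rw [le_div_iff₀ hε2]
      calc ((ρ m) {s | ε ^ 2 ≤ (empInt g s) ^ 2}).toReal * ε ^ 2
          = ε ^ 2 * ((ρ m) {s | ε ^ 2 ≤ (empInt g s) ^ 2}).toReal := mul_comm _ _
      _ ≤ ∫ s, (empInt g s) ^ 2 ∂(ρ m) := key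
    exact hmono.trans h2
  have hb0 : Tendsto (fun n => (ε ^ 2)⁻¹ * V (n + 1)) atTop (𝓝 0) := by
    have := hVlim1.const_mul ((ε ^ 2)⁻¹)
    simpa using this
  exact squeeze_zero (fun n => ENNReal.toReal_nonneg) cheb hb0

end DirF2

section DirF3
variable {S : Type*} [MetricSpace S] [TopologicalSpace.SeparableSpace S]
    [MeasurableSpace S] [BorelSpace S]

noncomputable def toRealBCF (f : S →ᵇ ℝ≥0) : S →ᵇ ℝ :=
  BoundedContinuousFunction.comp ((↑) : ℝ≥0 → ℝ)
    (LipschitzWith.of_dist_le_mul fun x y => by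
      rw [NNReal.coe_one, one_mul, NNReal.dist_eq, Real.dist_eq]) f

lemma toRealBCF_apply (f : S →ᵇ ℝ≥0) (x : S) : toRealBCF f x = (f x : ℝ) := rfl

lemma empLawTendsto_of_isChaotic
    (ρ : ∀ n, Measure (Fin n → S)) (hprob : ∀ n, IsProbabilityMeasure (ρ n))
    (hsym : ∀ n, IsSymmetricLaw (ρ n)) (p : ProbabilityMeasure S)
    (hchaos : IsChaotic ρ (p : Measure S)) : EmpLawTendsto ρ p := by
  intro Φ
  haveI : ∀ n, IsProbabilityMeasure (ρ n) := hprob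
  rw [Metric.tendsto_atTop]
  intro ε hε
  -- continuity of Φ at p : get a neighborhood controlled by finitely many test functions
  have hU : Φ ⁻¹' Metric.ball (Φ p) (ε / 2) ∈ 𝓝 p :=
    Φ.continuous.continuousAt (Metric.ball_mem_nhds _ (by positivity))
  obtain ⟨T, δ, hδ, hT⟩ := probabilityMeasure_nhds_subbasis hU
  -- bad sets
  set Bad : ∀ n : ℕ, Set (Fin (n + 1) → S) := fun n =>
    ⋃ f ∈ T, {s | δ ≤ |empInt (toRealBCF f) s - ∫ x, toRealBCF f x ∂(p : Measure S)|} with hBad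
  have hBadMeas : ∀ n, MeasurableSet (Bad n) := by
    intro n
    apply MeasurableSet.biUnion T.countable_toSet
    intro f _
    have hcl : IsClosed {s : Fin (n+1) → S |
        δ ≤ |empInt (toRealBCF f) s - ∫ x, toRealBCF f x ∂(p : Measure S)|} :=
      isClosed_le continuous_const (((continuous_empInt _).sub continuous_const).abs)
    exact hcl.measurableSet
  have hbad : Tendsto (fun n => ((ρ (n + 1)) (Bad n)).toReal) atTop (𝓝 0) := by
    apply squeeze_zero (fun n => ENNReal.toReal_nonneg) (g := fun n =>
      ∑ f ∈ T, ((ρ (n + 1)) {s | δ ≤ |empInt (toRealBCF f) s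
        - ∫ x, toRealBCF f x ∂(p : Measure S)|}).toReal)
    · intro n
      have h1 := measure_biUnion_finset_le (μ := ρ (n+1)) T (fun f =>
        {s : Fin (n+1) → S | δ ≤ |empInt (toRealBCF f) s
          - ∫ x, toRealBCF f x ∂(p : Measure S)|})
      have h2 : (∑ f ∈ T, (ρ (n + 1)) {s | δ ≤ |empInt (toRealBCF f) s
          - ∫ x, toRealBCF f x ∂(p : Measure S)|}).toReal
          = ∑ f ∈ T, ((ρ (n + 1)) {s | δ ≤ |empInt (toRealBCF f) s
          - ∫ x, toRealBCF f x ∂(p : Measure S)|}).toReal :=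
        ENNReal.toReal_sum fun f _ => measure_ne_top _ _
      rw [← h2]
      exact ENNReal.toReal_mono (by
        exact (ENNReal.sum_lt_top.mpr (fun f _ => measure_lt_top _ _)).ne) h1
    · have := tendsto_finset_sum T (fun f _ =>
        meas_bad_tendsto ρ hprob hsym p hchaos (toRealBCF f) hδ)
      simpa using this
  -- on the complement of the bad set we are in U
  have hgood : ∀ n : ℕ, ∀ s : Fin (n + 1) → S, s ∉ Bad n →
      |Φ (empiricalPM (n + 1) s) - Φ p| < ε / 2 := by
    intro n s hs
    rw [hBad, Set.mem_iUnion₂] at hs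
    push_neg at hs
    have hmem : empiricalPM (n + 1) s ∈ Φ ⁻¹' Metric.ball (Φ p) (ε / 2) := by
      apply hT
      intro f hf
      have := hs f hf
      rw [Set.mem_setOf_eq, not_le] at this
      exact this
    rw [Set.mem_preimage, Metric.mem_ball, Real.dist_eq] at hmem
    exact hmem
  -- integrability and continuity of the integrand
  have hcontΦ : ∀ n : ℕ, Continuous (fun s : Fin (n + 1) → S => Φ (empiricalPM (n + 1) s)) :=
    fun n => Φ.continuous.comp continuous_empiricalPM
  have hint : ∀ n : ℕ, Integrable (fun s : Fin (n + 1) → S => Φ (empiricalPM (n + 1) s))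
      (ρ (n + 1)) := fun n => (integrable_const ‖Φ‖).mono'
    (hcontΦ n).aestronglyMeasurable
    (Filter.Eventually.of_forall fun s => Φ.norm_coe_le_norm _)
  -- choose N
  have hev : ∀ᶠ n in atTop, ((ρ (n + 1)) (Bad n)).toReal < ε / (8 * (‖Φ‖ + 1)) :=
    hbad.eventually_lt_const (by positivity)
  obtain ⟨N, hN⟩ := eventually_atTop.mp hev
  refine ⟨N, fun n hn => ?_⟩
  have hrn := hN n hn
  -- main estimate
  set m : ℕ := n + 1
  set h : (Fin m → S) → ℝ := fun s => Φ (empiricalPM m s) - Φ p with hh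
  have hinth : Integrable h (ρ m) := (hint n).sub (integrable_const _)
  have hsplit : ∫ s, h s ∂(ρ m) = (∫ s in Bad n, h s ∂(ρ m)) + ∫ s in (Bad n)ᶜ, h s ∂(ρ m) :=
    (integral_add_compl (hBadMeas n) hinth).symm
  have hIeq : (∫ s, Φ (empiricalPM m s) ∂(ρ m)) - Φ p = ∫ s, h s ∂(ρ m) := by
    rw [hh]
    rw [integral_sub (hint n) (integrable_const _), integral_const]
    simp
    rfl
  have hb1 : ‖∫ s in Bad n, h s ∂(ρ m)‖ ≤ (2 * ‖Φ‖) * ((ρ m) (Bad n)).toReal := by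
    apply norm_setIntegral_le_of_norm_le_const (measure_lt_top _ _)
    · intro s _
      rw [hh, Real.norm_eq_abs]
      calc |Φ (empiricalPM m s) - Φ p| ≤ |Φ (empiricalPM m s)| + |Φ p| := abs_sub _ _
      _ ≤ ‖Φ‖ + ‖Φ‖ := add_le_add (Φ.norm_coe_le_norm _) (Φ.norm_coe_le_norm _)
      _ = 2 * ‖Φ‖ := by ring
  have hb2 : ‖∫ s in (Bad n)ᶜ, h s ∂(ρ m)‖ ≤ (ε / 2) * ((ρ m) (Bad n)ᶜ).toReal := by
    apply norm_setIntegral_le_of_norm_le_const (measure_lt_top _ _)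
    · intro s hs
      rw [hh, Real.norm_eq_abs]
      exact (hgood n s hs).le
  have hc1 : ((ρ m) (Bad n)ᶜ).toReal ≤ 1 := by
    have : (ρ m) (Bad n)ᶜ ≤ 1 := prob_le_one
    calc ((ρ m) (Bad n)ᶜ).toReal ≤ (1 : ℝ≥0∞).toReal :=
          ENNReal.toReal_mono (by simp) this
    _ = 1 := by simp
  have hΦnn : (0:ℝ) ≤ ‖Φ‖ := norm_nonneg _
  have hfinal : |(∫ s, Φ (empiricalPM m s) ∂(ρ m)) - Φ p| < ε := by
    rw [hIeq, hsplit]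
    calc |(∫ s in Bad n, h s ∂(ρ m)) + ∫ s in (Bad n)ᶜ, h s ∂(ρ m)|
        ≤ |∫ s in Bad n, h s ∂(ρ m)| + |∫ s in (Bad n)ᶜ, h s ∂(ρ m)| := abs_add_le _ _
      _ ≤ (2 * ‖Φ‖) * ((ρ m) (Bad n)).toReal + (ε / 2) * ((ρ m) (Bad n)ᶜ).toReal := by
          rw [← Real.norm_eq_abs, ← Real.norm_eq_abs]
          exact add_le_add hb1 hb2
      _ ≤ (2 * ‖Φ‖) * (ε / (8 * (‖Φ‖ + 1))) + (ε / 2) * 1 := by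
          apply add_le_add
          · exact mul_le_mul_of_nonneg_left hrn.le (by positivity)
          · exact mul_le_mul_of_nonneg_left hc1 (by positivity)
      _ < ε := by
          have key : (2 * ‖Φ‖) * (ε / (8 * (‖Φ‖ + 1))) < ε / 4 := by
            have h8 : (0:ℝ) < 8 * (‖Φ‖ + 1) := by positivity
            rw [mul_div_assoc', div_lt_div_iff₀ h8 (by norm_num : (0:ℝ) < 4)]
            nlinarith
          linarith
  rw [Real.dist_eq]
  exact hfinal

end DirF3


/-- (Sznitman–Tanaka) `{ρ_n}` is `p`-chaotic iff the laws of the empirical measures converge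
weakly in `P(P(S))` to the point mass at `p`. -/
theorem stmt5 {S : Type*} [MetricSpace S] [TopologicalSpace.SeparableSpace S]
    [MeasurableSpace S] [BorelSpace S]
    (ρ : ∀ n, Measure (Fin n → S)) (hprob : ∀ n, IsProbabilityMeasure (ρ n))
    (hsym : ∀ n, IsSymmetricLaw (ρ n))
    (p : ProbabilityMeasure S) :
    IsChaotic ρ (p : Measure S) ↔ EmpLawTendsto ρ p :=
  ⟨fun hch => empLawTendsto_of_isChaotic ρ hprob hsym p hch,
   fun h => isChaotic_of_empLawTendsto ρ hprob hsym p h⟩
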